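/- Let n be a positive integer and let 𝓕 be a family of subsets of [n] = {1,2,...,n} that contains no sunflower with 3 petals. Then |𝓕| ≤ 3n·∑_{i=0}^{⌊n/3⌋} C(n, i), where C(n, i) denotes the binomial coefficient 'n choose i'. -/

import Mathlib

/-- `{F₁, F₂, F₃}` is a sunflower with 3 petals: the three sets are pairwise
distinct and any pairwise intersection equals the common intersection. -/
def IsSunflower3 {α : Type*} [DecidableEq α] (F₁ F₂ F₃ : Finset α) : Prop :=
  F₁ ≠ F₂ ∧ F₁ ≠ F₃ ∧ F₂ ≠ F₃ ∧
  F₁ ∩ F₂ = F₁ ∩ F₂ ∩ F₃ ∧ F₁ ∩ F₃ = F₁ ∩ F₂ ∩ F₃ ∧ F₂ ∩ F₃ = F₁ ∩ F₂ ∩ F₃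

/-- A family is sunflower-free if no three of its members form a sunflower
with 3 petals. -/
def SunflowerFree {α : Type*} [DecidableEq α] (𝓕 : Finset (Finset α)) : Prop :=
  ∀ F₁ ∈ 𝓕, ∀ F₂ ∈ 𝓕, ∀ F₃ ∈ 𝓕, ¬ IsSunflower3 F₁ F₂ F₃

/-!
Naslund–Sawin's slice-rank argument. On the indicator vectors of sets, the function
`T(x, y, z) = ∏ᵢ (xᵢ + yᵢ + zᵢ - 2)` vanishes as soon as some point lies in exactly two of
`x, y, z`; for three members of a sunflower-free antichain this happens unless `x = y = z`,
while `T(x, x, x) ≠ 0`. So `T` restricted to the family is a diagonal tensor with nonzero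
diagonal, whose slice rank is the size of the family (Tao). Expanding the product, every
monomial has degree at most `n/3` in one of the three groups of variables, and there are
`∑_{i ≤ n/3} C(n, i)` multilinear monomials of such degree, which bounds the slice rank by three
times this number. A general family is split into its `n + 1` levels, which are antichains; the
two extreme levels contain at most one set each.
-/

open Finset Module Submodule

theorem Submodule.exists_mem_finrank_le_card_support {K A : Type*} [Field K] [DecidableEq K]
    [Fintype A] (W : Submodule K (A → K)) : ∃ h ∈ W, finrank K W ≤ #{a | h a ≠ 0} := by
  classical
  obtain ⟨h, hW, hmax⟩ := (measure fun h : A → K => Fintype.card A - #{a | h a ≠ 0}).wf.has_min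
    (W : Set (A → K)) ⟨0, W.zero_mem⟩
  refine ⟨h, hW, ?_⟩
  set σ : Finset A := {a | h a ≠ 0}
  -- `h` has maximal support in `W`, so no nonzero `w ∈ W` vanishes on it: `h + w` would do better
  have hvanish : ∀ w ∈ W, (∀ a ∈ σ, w a = 0) → w = 0 := by
    intro w hw hσ
    by_contra hne
    obtain ⟨b, hb⟩ := Function.ne_iff.mp hne
    have hbσ : b ∉ σ := fun h' => hb (hσ b h')
    have hsub : insert b σ ⊆ ({a | (h + w) a ≠ 0} : Finset A) := by
      intro a ha
      have : h b = 0 := by simpa [σ] using hbσ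
      rcases mem_insert.mp ha with rfl | ha
      · simpa [this] using hb
      · simpa [hσ a ha, σ] using ha
    have hlt := card_le_card hsub
    rw [card_insert_of_notMem hbσ] at hlt
    have hle := card_le_univ ({a | (h + w) a ≠ 0} : Finset A)
    exact hmax _ (W.add_mem hW hw) (by show Fintype.card A - _ < Fintype.card A - #σ; omega)
  let restrict : W →ₗ[K] (σ → K) := (LinearMap.funLeft K K ((↑) : σ → A)).comp W.subtype
  have hinj : Function.Injective restrict := by
    rw [← LinearMap.ker_eq_bot, LinearMap.ker_eq_bot']
    intro w hw
    exact Subtype.ext (hvanish w w.2 fun a ha => congrFun hw ⟨a, ha⟩)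
  simpa using LinearMap.finrank_le_finrank_of_injective hinj

theorem card_le_of_eq_sum_slices {K A : Type*} [Field K] [DecidableEq K] [Fintype A]
    [DecidableEq A] (T : A → A → A → K) (hT : ∀ x y z, T x y z ≠ 0 ↔ x = y ∧ y = z)
    (F₁ F₂ F₃ : Finset (A → K)) (g₁ g₂ g₃ : (A → K) → A → A → K)
    (hsum : ∀ x y z, T x y z = ∑ u ∈ F₁, u x * g₁ u y z + ∑ u ∈ F₂, u y * g₂ u x z +
      ∑ u ∈ F₃, u z * g₃ u x y) :
    Fintype.card A ≤ #F₁ + #F₂ + #F₃ := by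
  let L : (A → K) →ₗ[K] (F₁ → K) := Matrix.mulVecLin fun u x => (u : A → K) x
  have hker : Fintype.card A ≤ #F₁ + finrank K (LinearMap.ker L) := by
    have hrange : finrank K (LinearMap.range L) ≤ #F₁ := by
      simpa using (LinearMap.range L).finrank_le
    have := LinearMap.finrank_range_add_finrank_ker L
    rw [finrank_fintype_fun_eq_card] at this
    omega
  obtain ⟨h, hL, hsupp⟩ := (LinearMap.ker L).exists_mem_finrank_le_card_support
  have hF₁ : ∀ u ∈ F₁, ∑ x, u x * h x = 0 := fun u hu =>
    congrFun (LinearMap.mem_ker.mp hL) ⟨u, hu⟩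
  let G : (A → K) → A → K := fun u z => ∑ x, h x * g₂ u x z
  set Ψ : Finset (A → K) := F₂.image G ∪ F₃
  -- Contracting `T` with `h` in the first slot kills the slices through `F₁` and, by
  -- diagonality, leaves `h y * T y y y` times the coordinate vector at `y`.
  have hsingle : ∀ y, h y ≠ 0 → Pi.single y 1 ∈ span K (Ψ : Set (A → K)) := by
    intro y hy
    have hdiag : (fun z => ∑ x, h x * T x y z) = (h y * T y y y) • Pi.single y 1 := by
      ext z
      rw [sum_eq_single y]
      · by_cases hz : z = y
        · subst hz
          simp
        · have : T y y z = 0 := by_contra fun hne => hz ((hT y y z).mp hne).2.symm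
          simp [this, hz]
      · intro x _ hx
        have : T x y z = 0 := by_contra fun hne => hx ((hT x y z).mp hne).1
        simp [this]
      · simp
    have hexp : (fun z => ∑ x, h x * T x y z) =
        ∑ u ∈ F₂, u y • G u + ∑ u ∈ F₃, (∑ x, h x * g₃ u x y) • u := by
      ext z
      simp only [hsum, mul_add, sum_add_distrib, Finset.mul_sum, Finset.sum_mul, Pi.add_apply,
        Finset.sum_apply, Pi.smul_apply, smul_eq_mul, G]
      have hzero : ∑ x, ∑ u ∈ F₁, h x * (u x * g₁ u y z) = 0 := by
        rw [sum_comm]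
        refine sum_eq_zero fun u hu => ?_
        rw [← zero_mul (g₁ u y z), ← hF₁ u hu, sum_mul]
        exact sum_congr rfl fun x _ => by ring
      rw [hzero, zero_add, sum_comm, sum_comm (s := univ)]
      congr 1 <;> exact sum_congr rfl fun u _ => sum_congr rfl fun x _ => by ring
    have hne : h y * T y y y ≠ 0 := mul_ne_zero hy ((hT y y y).mpr ⟨rfl, rfl⟩)
    rw [← smul_mem_iff _ hne, ← hdiag, hexp]
    refine add_mem (sum_mem fun u hu => smul_mem _ _ (subset_span ?_))
      (sum_mem fun u hu => smul_mem _ _ (subset_span ?_))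
    · exact mem_union_left _ (mem_image_of_mem G hu)
    · exact mem_union_right _ hu
  set σ : Finset A := {a | h a ≠ 0}
  have hindep : LinearIndependent K fun y : σ => (Pi.single (y : A) 1 : A → K) :=
    (Pi.linearIndependent_single_one A K).comp _ Subtype.val_injective
  have hσ : #σ ≤ #F₂ + #F₃ :=
    calc #σ = finrank K (span K (Set.range fun y : σ => (Pi.single (y : A) 1 : A → K))) := by
          rw [finrank_span_eq_card hindep, Fintype.card_coe]
      _ ≤ finrank K (span K (Ψ : Set (A → K))) := by
          refine Submodule.finrank_mono (span_le.mpr ?_)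
          rintro _ ⟨y, rfl⟩
          exact hsingle y (mem_filter.mp y.2).2
      _ ≤ #Ψ := finrank_span_finset_le_card _
      _ ≤ #F₂ + #F₃ := (card_union_le _ _).trans (Nat.add_le_add_right card_image_le _)
  omega

theorem Finset.sum_mul_eq_sum_mul_sum_fiberwise {ι κ R : Type*} [DecidableEq κ]
    [NonUnitalNonAssocSemiring R] {s : Finset ι} {t : Finset κ} {g : ι → κ}
    (h : ∀ i ∈ s, g i ∈ t) (f : κ → R) (r : ι → R) :
    ∑ i ∈ s, f (g i) * r i = ∑ j ∈ t, f j * ∑ i ∈ s with g i = j, r i := by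
  rw [← sum_fiberwise_of_maps_to h]
  refine sum_congr rfl fun j _ => ?_
  rw [mul_sum]
  exact sum_congr rfl fun i hi => by rw [(mem_filter.mp hi).2]

theorem card_le_of_eq_sum_triple_products {K A ι : Type*} [Field K] [DecidableEq K]
    [Fintype A] [DecidableEq A] (T : A → A → A → K) (hT : ∀ x y z, T x y z ≠ 0 ↔ x = y ∧ y = z)
    (Φ : Finset ι) (w : ι → K) (a b c : ι → A → K)
    (hsum : ∀ x y z, T x y z = ∑ φ ∈ Φ, w φ * a φ x * b φ y * c φ z)
    (F₁ F₂ F₃ : Finset (A → K)) (hF : ∀ φ ∈ Φ, a φ ∈ F₁ ∨ b φ ∈ F₂ ∨ c φ ∈ F₃) :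
    Fintype.card A ≤ #F₁ + #F₂ + #F₃ := by
  classical
  set Φ₁ := Φ.filter (a · ∈ F₁)
  set Φ₂ := (Φ.filter (a · ∉ F₁)).filter (b · ∈ F₂)
  set Φ₃ := (Φ.filter (a · ∉ F₁)).filter (b · ∉ F₂)
  refine card_le_of_eq_sum_slices T hT F₁ F₂ F₃
    (fun u y z => ∑ φ ∈ Φ₁ with a φ = u, w φ * b φ y * c φ z)
    (fun u x z => ∑ φ ∈ Φ₂ with b φ = u, w φ * a φ x * c φ z)
    (fun u x y => ∑ φ ∈ Φ₃ with c φ = u, w φ * a φ x * b φ y) fun x y z => ?_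
  have h₁ : ∀ φ ∈ Φ₁, a φ ∈ F₁ := fun φ hφ => (mem_filter.mp hφ).2
  have h₂ : ∀ φ ∈ Φ₂, b φ ∈ F₂ := fun φ hφ => (mem_filter.mp hφ).2
  have h₃ : ∀ φ ∈ Φ₃, c φ ∈ F₃ := fun φ hφ => by
    simp only [Φ₃, mem_filter] at hφ
    exact ((hF φ hφ.1.1).resolve_left hφ.1.2).resolve_left hφ.2
  rw [hsum, ← sum_filter_add_sum_filter_not Φ (a · ∈ F₁),
    ← sum_filter_add_sum_filter_not (Φ.filter (a · ∉ F₁)) (b · ∈ F₂), ← add_assoc,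
    ← sum_mul_eq_sum_mul_sum_fiberwise h₁ (fun u => u x),
    ← sum_mul_eq_sum_mul_sum_fiberwise h₂ (fun u => u y),
    ← sum_mul_eq_sum_mul_sum_fiberwise h₃ (fun u => u z)]
  refine congrArg₂ (· + ·) (congrArg₂ (· + ·) ?_ ?_) ?_ <;>
    exact sum_congr rfl fun φ _ => by ring

section

variable {α : Type*} [DecidableEq α]

theorem SunflowerFree.mono {𝓐 𝓑 : Finset (Finset α)} (h : SunflowerFree 𝓐) (h𝓑 : 𝓑 ⊆ 𝓐) :
    SunflowerFree 𝓑 :=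
  fun x hx y hy z hz => h x (h𝓑 hx) y (h𝓑 hy) z (h𝓑 hz)

theorem isSunflower3_of_inter_subset {x y z : Finset α} (hxy : x ≠ y) (hxz : x ≠ z) (hyz : y ≠ z)
    (h₃ : x ∩ y ⊆ z) (h₂ : x ∩ z ⊆ y) (h₁ : y ∩ z ⊆ x) : IsSunflower3 x y z := by
  refine ⟨hxy, hxz, hyz, ?_, ?_, ?_⟩ <;> ext i <;> grind

theorem SunflowerFree.eq_of_inter_subset {𝓐 : Finset (Finset α)} (hsf : SunflowerFree 𝓐)
    (h𝓐 : IsAntichain (· ⊆ ·) (𝓐 : Set (Finset α))) {x y z : Finset α} (hx : x ∈ 𝓐) (hy : y ∈ 𝓐)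
    (hz : z ∈ 𝓐) (h₃ : x ∩ y ⊆ z) (h₂ : x ∩ z ⊆ y) (h₁ : y ∩ z ⊆ x) : x = y ∧ y = z := by
  by_cases hxy : x = y
  · subst hxy
    exact ⟨rfl, h𝓐.eq hx hz (by simpa using h₃)⟩
  by_cases hxz : x = z
  · subst hxz
    exact absurd (h𝓐.eq hx hy (by simpa using h₂)) hxy
  by_cases hyz : y = z
  · subst hyz
    exact absurd (h𝓐.eq hy hx (by simpa using h₁)).symm hxy
  exact absurd (isSunflower3_of_inter_subset hxy hxz hyz h₃ h₂ h₁) (hsf x hx y hy z hz)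

end

theorem exists_card_fiber_le {α : Type*} [Fintype α] (φ : α → Fin 4) :
    #{i | φ i = 0} ≤ Fintype.card α / 3 ∨ #{i | φ i = 1} ≤ Fintype.card α / 3 ∨
      #{i | φ i = 2} ≤ Fintype.card α / 3 := by
  have hfibers := card_eq_sum_card_fiberwise (s := univ) (t := univ) (f := φ)
    fun _ _ => mem_univ _
  rw [Fin.sum_univ_four, card_univ] at hfibers
  omega

section

variable {α : Type*} [Fintype α] [DecidableEq α]

def sunflowerTensor (x y z : Finset α) : ℚ :=
  ∏ i, ((if i ∈ x then 1 else 0) + (if i ∈ y then 1 else 0) + (if i ∈ z then 1 else 0) - 2)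

def subsetIndicator (S x : Finset α) : ℚ := if S ⊆ x then 1 else 0

theorem sunflowerTensor_eq_sum (x y z : Finset α) :
    sunflowerTensor x y z = ∑ φ : α → Fin 4, (-2) ^ #{i | φ i = 3} *
      subsetIndicator {i | φ i = 0} x * subsetIndicator {i | φ i = 1} y *
      subsetIndicator {i | φ i = 2} z := by
  let f : α → Fin 4 → ℚ := fun i =>
    ![if i ∈ x then 1 else 0, if i ∈ y then 1 else 0, if i ∈ z then 1 else 0, -2]
  have hfactor : ∀ i, ((if i ∈ x then 1 else 0) + (if i ∈ y then 1 else 0) +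
      (if i ∈ z then 1 else 0) - 2 : ℚ) = ∑ j, f i j := fun i => by
    simp [f, Fin.sum_univ_four, sub_eq_add_neg]
  simp only [sunflowerTensor, hfactor, Fintype.prod_sum]
  refine sum_congr rfl fun φ _ => ?_
  have hfiber : ∀ j, ∏ i with φ i = j, f i (φ i) = ∏ i with φ i = j, f i j :=
    fun j => prod_congr rfl fun i hi => by rw [(mem_filter.mp hi).2]
  rw [← prod_fiberwise univ φ, Fin.prod_univ_four, hfiber, hfiber, hfiber, hfiber]
  simp [f, subsetIndicator, prod_boole, subset_iff, mul_comm]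

theorem sunflowerTensor_self_ne_zero (x : Finset α) : sunflowerTensor x x x ≠ 0 :=
  prod_ne_zero_iff.mpr fun i _ => by split_ifs <;> norm_num

theorem inter_subset_of_sunflowerTensor_ne_zero {x y z : Finset α}
    (h : sunflowerTensor x y z ≠ 0) : x ∩ y ⊆ z ∧ x ∩ z ⊆ y ∧ y ∩ z ⊆ x := by
  -- a point lying in exactly two of the sets makes its factor `1 + 1 + 0 - 2` vanish
  have hfactor := fun i => prod_ne_zero_iff.mp h i (mem_univ i)
  refine ⟨fun i hi => ?_, fun i hi => ?_, fun i hi => ?_⟩ <;> rw [mem_inter] at hi <;>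
    by_contra hni <;> exact hfactor i (by norm_num [hi, hni])

theorem SunflowerFree.card_le_of_isAntichain {𝓐 : Finset (Finset α)} (hsf : SunflowerFree 𝓐)
    (h𝓐 : IsAntichain (· ⊆ ·) (𝓐 : Set (Finset α))) :
    #𝓐 ≤ 3 * #{S : Finset α | #S ≤ Fintype.card α / 3} := by
  set D : Finset (Finset α) := {S | #S ≤ Fintype.card α / 3}
  let F : Finset (𝓐 → ℚ) := D.image fun S x => subsetIndicator S x
  have hF : ∀ S, #S ≤ Fintype.card α / 3 → (fun x : 𝓐 => subsetIndicator S x.1) ∈ F :=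
    fun S hS => mem_image_of_mem _ (mem_filter.mpr ⟨mem_univ _, hS⟩)
  have hdiag : ∀ x y z : 𝓐, sunflowerTensor x.1 y.1 z.1 ≠ 0 ↔ x = y ∧ y = z := by
    intro x y z
    constructor
    · intro h
      obtain ⟨h₃, h₂, h₁⟩ := inter_subset_of_sunflowerTensor_ne_zero h
      obtain ⟨hxy, hyz⟩ := hsf.eq_of_inter_subset h𝓐 x.2 y.2 z.2 h₃ h₂ h₁
      exact ⟨Subtype.ext hxy, Subtype.ext hyz⟩
    · rintro ⟨rfl, rfl⟩
      exact sunflowerTensor_self_ne_zero _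
  have hsmall : ∀ φ ∈ (univ : Finset (α → Fin 4)),
      (fun x : 𝓐 => subsetIndicator {i | φ i = 0} x.1) ∈ F ∨
      (fun x : 𝓐 => subsetIndicator {i | φ i = 1} x.1) ∈ F ∨
      (fun x : 𝓐 => subsetIndicator {i | φ i = 2} x.1) ∈ F := by
    intro φ _
    rcases exists_card_fiber_le φ with h | h | h
    exacts [Or.inl (hF _ h), Or.inr (Or.inl (hF _ h)), Or.inr (Or.inr (hF _ h))]
  have hrank := card_le_of_eq_sum_triple_products _ hdiag univ _ _ _ _
    (fun x y z => sunflowerTensor_eq_sum x.1 y.1 z.1) F F F hsmall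
  have hcard : #F ≤ #D := card_image_le
  rw [Fintype.card_coe] at hrank
  omega

theorem SunflowerFree.card_le (hα : 0 < Fintype.card α) {𝓕 : Finset (Finset α)}
    (hsf : SunflowerFree 𝓕) :
    #𝓕 ≤ 3 * Fintype.card α * #{S : Finset α | #S ≤ Fintype.card α / 3} := by
  obtain ⟨m, hm⟩ : ∃ m, Fintype.card α = m + 1 := ⟨_, (Nat.succ_pred_eq_of_pos hα).symm⟩
  set D := #{S : Finset α | #S ≤ Fintype.card α / 3}
  have hD : 1 ≤ D := card_pos.mpr ⟨∅, by simp⟩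
  have hlevel : ∀ j, #{F ∈ 𝓕 | #F = j} ≤ 3 * D := fun j =>
    (hsf.mono (filter_subset _ _)).card_le_of_isAntichain
      (Set.Sized.isAntichain fun F hF => (mem_filter.mp hF).2)
  have hchoose : ∀ j, #{F ∈ 𝓕 | #F = j} ≤ (Fintype.card α).choose j := fun j => by
    rw [← card_univ, ← card_powersetCard]
    exact card_le_card fun F hF => mem_powersetCard_univ.mpr (mem_filter.mp hF).2
  calc #𝓕 = ∑ j ∈ range (m + 2), #{F ∈ 𝓕 | #F = j} :=
        card_eq_sum_card_fiberwise fun F _ => by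
          simpa [Nat.lt_succ_iff, ← hm] using card_le_univ F
    _ = #{F ∈ 𝓕 | #F = 0} + ∑ j ∈ range m, #{F ∈ 𝓕 | #F = j + 1} +
          #{F ∈ 𝓕 | #F = m + 1} := by
        rw [sum_range_succ, sum_range_succ']
        ring
    _ ≤ 1 + ∑ _j ∈ range m, 3 * D + 1 := by
        gcongr
        · simpa using hchoose 0
        · exact hlevel _
        · simpa [hm] using hchoose (m + 1)
    _ ≤ 3 * Fintype.card α * D := by
        rw [sum_const, card_range, smul_eq_mul, hm]
        nlinarith

end

theorem card_filter_card_le_eq_sum_choose (α : Type*) [Fintype α] (k : ℕ) :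
    #{S : Finset α | #S ≤ k} = ∑ i ∈ range (k + 1), (Fintype.card α).choose i := by
  rw [card_eq_sum_card_fiberwise (f := card) (t := range (k + 1))
    fun S hS => by simpa [Nat.lt_succ_iff] using hS]
  refine sum_congr rfl fun i hi => ?_
  rw [← card_univ, ← card_powersetCard]
  congr 1
  ext S
  simp only [mem_filter, mem_univ, true_and, mem_powersetCard_univ, mem_range] at hi ⊢
  omega

theorem stmt_2 (n : ℕ) (hn : 0 < n)
    (𝓕 : Finset (Finset (Fin n)))
    (hsf : SunflowerFree 𝓕) :
    𝓕.card ≤ 3 * n * ∑ i ∈ Finset.range (n / 3 + 1), Nat.choose n i := by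
  simpa [card_filter_card_le_eq_sum_choose] using
    hsf.card_le (by simpa using hn)
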